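/- arXiv:1903.07328 — 3 statements merged into one kernel-verified Lean document; each statement's English description precedes it below -/
import Mathlib

section
/- Let A be a parametric timed automaton over the alphabet Σ ⊔ {$} and let w = (ā,τ̄) be a timed word over Σ. Assume ⋃_v L_{−$}(A[v]) ≠ ∅ (union over all parameter valuations v) and let N = min{|u| : u ∈ ⋃_v L_{−$}(A[v])}. Then for every index i ≥ 1 with i + N ≤ |w| and every integer m with 1 ≤ m and m < Δ_QS(a_{i+N}), the match set M(w,A) contains no triple (t₀,t′,v) with τ_{i+m−1} ≤ t₀ < τ_{i+m}. -/
open scoped Classical NNRat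

namespace PTPM

/-- Timed words over an alphabet `α`: finite sequences of (letter, timestamp). -/
abbrev TWord (α : Type*) := List (α × ℝ)

/-- Well-formedness of a timed word: positive, strictly increasing timestamps. -/
def IsTW {α : Type*} (w : TWord α) : Prop :=
  (∀ p ∈ w, 0 < p.2) ∧ w.Chain' (fun p q => p.2 < q.2)

/-- `T(Σ)`: the set of timed words over `α`. -/
def TW (α : Type*) : Set (TWord α) := {w | IsTW w}

/-- `T^n(Σ)`: the set of timed words over `α` of length `n`. -/
def TWn (α : Type*) (n : ℕ) : Set (TWord α) := {w | IsTW w ∧ w.length = n}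

/-- The shift `w + s` of a timed word. -/
def shift {α : Type*} (w : TWord α) (s : ℝ) : TWord α := w.map fun p => (p.1, p.2 + s)

/-- Last timestamp of a timed word (`0` for the empty word). -/
def lastT {α : Type*} (w : TWord α) : ℝ := (w.getLast?.map Prod.snd).getD 0

/-- Non-absorbing concatenation `w · w'`. -/
def ncat {α : Type*} (w w' : TWord α) : TWord α := w ++ shift w' (lastT w)

/-- Non-absorbing concatenation lifted to sets of timed words. -/
def ncatS {α : Type*} (W W' : Set (TWord α)) : Set (TWord α) :=
  {u | ∃ w ∈ W, ∃ w' ∈ W', u = ncat w w'}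

/-- `τ_k`, the `k`-th timestamp (1-indexed), with `τ_0 = 0`. -/
def tau {α : Type*} (w : TWord α) (k : ℕ) : ℝ := lastT (w.take k)

/-- The subsequence `w(i,j)` (1-indexed, both inclusive; empty if `i > j`). -/
def sub {α : Type*} (w : TWord α) (i j : ℕ) : TWord α := (w.take j).drop (i - 1)

/-- Letter at position `k` (1-indexed), if any. -/
def letterAt {α : Type*} (w : TWord α) (k : ℕ) : Option α := w[k - 1]?.map Prod.fst

/-- Embedding of timed words over `Σ` into timed words over `Σ ⊔ {$}`;
the terminal character `$` is modelled by `none`. -/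
def liftW {α : Type*} (w : TWord α) : TWord (Option α) := w.map fun p => (some p.1, p.2)

/-- `T(Σ)` viewed inside the alphabet `Σ ⊔ {$}`. -/
def TWl (α : Type*) : Set (TWord (Option α)) := liftW '' TW α

/-- `T^n(Σ)` viewed inside the alphabet `Σ ⊔ {$}`. -/
def TWln (α : Type*) (n : ℕ) : Set (TWord (Option α)) := liftW '' TWn α n

/-- The segment `w|_(t,t')`, a timed word over `Σ ⊔ {$}`. -/
noncomputable def seg {α : Type*} (w : TWord α) (t t' : ℝ) : TWord (Option α) :=
  (w.filter fun p => decide (t < p.2 ∧ p.2 < t')).map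
      (fun p => ((some p.1 : Option α), p.2 - t))
    ++ [((none : Option α), t' - t)]

/-- `L_{-$}`: the words of `L` with the last element removed. -/
def minusDollar {β : Type*} (L : Set (TWord β)) : Set (TWord β) :=
  {u | ∃ x ∈ L, x ≠ [] ∧ u = x.dropLast}

/-- Untimed projection of a timed word. -/
def untimed {α : Type*} (w : TWord α) : List α := w.map Prod.fst

/-- Untimed projection of a set of timed words. -/
def untimedS {α : Type*} (W : Set (TWord α)) : Set (List α) := untimed '' W

/-- `U · Σ*`: the set of finite words having a prefix in `U`. -/
def prefSet {σ : Type*} (U : Set (List σ)) : Set (List σ) := {x | ∃ u ∈ U, ∃ s, x = u ++ s}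

/-- `Ŷ = {y + s | y ∈ Y, s ≥ 0}`. -/
def hatS {α : Type*} (Y : Set (TWord α)) : Set (TWord α) :=
  {u | ∃ y ∈ Y, ∃ s : ℝ, 0 ≤ s ∧ u = shift y s}

/-- Comparison operators `⋈ ∈ {<, ≤, =, ≥, >}`. -/
inductive Cmp | lt | le | eq | ge | gt

def Cmp.eval : Cmp → ℝ → ℝ → Prop
  | .lt, a, b => a < b
  | .le, a, b => a ≤ b
  | .eq, a, b => a = b
  | .ge, a, b => b ≤ a
  | .gt, a, b => b < a

/-- Atomic guard constraints `x ⋈ d` (`d ∈ ℕ`) and `x ⋈ p` (`p` a parameter). -/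
inductive Atom (C P : Type*)
  | nat (x : C) (op : Cmp) (d : ℕ)
  | par (x : C) (op : Cmp) (p : P)

/-- A guard: a finite conjunction of atomic constraints. -/
abbrev Guard (C P : Type*) := List (Atom C P)

def Atom.sat {C P : Type*} (μ : C → ℝ) (v : P → ℚ≥0) : Atom C P → Prop
  | .nat x op d => op.eval (μ x) (d : ℝ)
  | .par x op p => op.eval (μ x) ((v p : ℚ) : ℝ)

/-- `μ ⊨ v(g)`. -/
def Guard.sat {C P : Type*} (μ : C → ℝ) (v : P → ℚ≥0) (g : Guard C P) : Prop :=
  ∀ a ∈ g, a.sat μ v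

def Atom.mapCP {C P C' P' : Type*} (fc : C → C') (fp : P → P') : Atom C P → Atom C' P'
  | .nat x op d => .nat (fc x) op d
  | .par x op p => .par (fc x) op (fp p)

def Guard.mapCP {C P C' P' : Type*} (fc : C → C') (fp : P → P') (g : Guard C P) :
    Guard C' P' :=
  g.map (Atom.mapCP fc fp)

/-- Parametric timed automaton with alphabet `α`, locations `L`, clocks `C`, parameters `P`.
An edge `(ℓ, g, a, R, ℓ')` has source `ℓ`, guard `g`, action `a`, resets `R`, target `ℓ'`. -/
structure PTA (α L C P : Type*) where
  init : L
  acc : Set L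
  edges : Set (L × Guard C P × α × Set C × L)
  finEdges : edges.Finite

/-- Reset of the clocks in `R` to `0`. -/
noncomputable def resetv {C : Type*} (μ : C → ℝ) (R : Set C) : C → ℝ :=
  fun x => if x ∈ R then 0 else μ x

/-- `Steps A v ℓ μ τ w ℓ'`: from configuration (location `ℓ`, clock valuation `μ`,
absolute time `τ`) there is a run of `A[v]` reading the timed word `w` and ending in `ℓ'`. -/
inductive Steps {α L C P : Type*} (A : PTA α L C P) (v : P → ℚ≥0) :
    L → (C → ℝ) → ℝ → TWord α → L → Prop
  | refl (ℓ : L) (μ : C → ℝ) (τ : ℝ) : Steps A v ℓ μ τ [] ℓ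
  | step {ℓ : L} {μ : C → ℝ} {τ : ℝ} {g : Guard C P} {a : α} {R : Set C} {ℓ' ℓ'' : L}
      {d : ℝ} {w : TWord α}
      (hd : 0 ≤ d)
      (he : (ℓ, g, a, R, ℓ') ∈ A.edges)
      (hg : Guard.sat (fun x => μ x + d) v g)
      (h : Steps A v ℓ' (resetv (fun x => μ x + d) R) (τ + d) w ℓ'') :
      Steps A v ℓ μ τ ((a, τ + d) :: w) ℓ''

/-- The language `L(A[v])`: associated words of accepting runs that are timed words. -/
def lang {α L C P : Type*} (A : PTA α L C P) (v : P → ℚ≥0) : Set (TWord α) :=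
  {w | IsTW w ∧ ∃ ℓ ∈ A.acc, Steps A v A.init (fun _ => 0) 0 w ℓ}

/-- `A_ℓ`: the PTA `A` with accepting set `{ℓ}`. -/
def PTA.locAcc {α L C P : Type*} (A : PTA α L C P) (ℓ : L) : PTA α L C P :=
  { A with acc := {ℓ} }

/-- The match set `M(w, A)`. -/
def matchSet {α L C P : Type*} (w : TWord α) (A : PTA (Option α) L C P) :
    Set (ℝ × ℝ × (P → ℚ≥0)) :=
  {x | 0 ≤ x.1 ∧ x.1 < x.2.1 ∧ seg w x.1 x.2.1 ∈ lang A x.2.2}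

/-- `V_{ℓ,n}`. -/
def Vset {α L C P : Type*} (A : PTA (Option α) L C P) (ℓ : L) (n : ℕ) :
    Set (P → ℚ≥0) :=
  {v | ∃ v' : P → ℚ≥0,
    (ncatS (lang (A.locAcc ℓ) v) (TWl α) ∩
      ncatS (ncatS (TWln α n) (hatS (minusDollar (lang A v')))) (TWl α)).Nonempty}

/-- The KMP-style skip value `Δ_KMP(ℓ, V) = min {n ≥ 1 | V ⊆ V_{ℓ,n}}` (min ∅ = ⊤). -/
noncomputable def DeltaKMP {α L C P : Type*} (A : PTA (Option α) L C P) (ℓ : L)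
    (V : Set (P → ℚ≥0)) : ℕ∞ :=
  sInf ((fun n : ℕ => (n : ℕ∞)) '' {n : ℕ | 1 ≤ n ∧ V ⊆ Vset A ℓ n})

/-- The non-parametric KMP-style skip value `Δ'_KMP(ℓ) = min_v Δ_KMP(ℓ, {v})`. -/
noncomputable def DeltaKMP' {α L C P : Type*} (A : PTA (Option α) L C P) (ℓ : L) : ℕ∞ :=
  ⨅ v : P → ℚ≥0, DeltaKMP A ℓ {v}

/-- Untimed words over `Σ`, viewed inside `Σ ⊔ {$}`. -/
def pureW {α : Type*} (x : List (Option α)) : Prop := ∀ c ∈ x, c ≠ none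

/-- `Σ^n · U` for sets of finite untimed words. -/
def catLen {α : Type*} (n : ℕ) (U : Set (List (Option α))) : Set (List (Option α)) :=
  {y | ∃ x u, x.length = n ∧ pureW x ∧ u ∈ U ∧ y = x ++ u}

/-- `Σ^N a Σ*`: finite words of length at least `N+1` whose `(N+1)`-st letter is `a`. -/
def sigNa {α : Type*} (N : ℕ) (a : α) : Set (List (Option α)) :=
  {x | N + 1 ≤ x.length ∧ x[N]? = some (some a)}

/-- The Quick-Search-style skip value `Δ_QS(a)` (min ∅ = ⊤). -/
noncomputable def DeltaQS {α L C P : Type*} (A : PTA (Option α) L C P) (N : ℕ) (a : α) :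
    ℕ∞ :=
  sInf ((fun n : ℕ => (n : ℕ∞)) '' {n : ℕ | 1 ≤ n ∧ ∃ v : P → ℚ≥0,
    (sigNa N a ∩ catLen n (untimedS (minusDollar (lang A v)))).Nonempty})

lemma filterTW {α : Type*} (c : ℝ) (l : List (α × ℝ))
    (h : l.Pairwise (fun p q => p.2 < q.2)) :
    l.filter (fun p => decide (p.2 < c)) = l.takeWhile (fun p => decide (p.2 < c)) := by
  induction l with
  | nil => rfl
  | cons x xs ih =>
    obtain ⟨hx, hxs⟩ := List.pairwise_cons.1 h
    by_cases hc : x.2 < c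
    · simp [List.filter_cons, List.takeWhile_cons, hc, ih hxs]
    · have hcb : (decide (x.2 < c)) = false := by simp [hc]
      simp only [List.filter_cons, List.takeWhile_cons, hcb, Bool.false_eq_true, if_neg,
        not_false_eq_true]
      rw [List.filter_eq_nil_iff.2]
      intro p hp
      simp only [decide_eq_true_eq]
      exact fun h' => hc (lt_trans (hx p hp) h')

lemma tau_eq {α : Type*} (w : TWord α) (k : ℕ) (h1 : 1 ≤ k) (h2 : k ≤ w.length)
    (hk : k - 1 < w.length) : tau w k = w[k - 1].2 := by
  unfold tau lastT
  rw [List.getLast?_eq_getElem?, List.length_take, min_eq_left h2,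
    List.getElem?_take, if_pos (by omega), List.getElem?_eq_getElem hk]
  rfl
/-- Theorem `QS`: correctness of Quick-Search-style skipping. -/
theorem statement2 {α L C P : Type*} [Finite α] [Finite L] [Finite C] [Finite P]
    (A : PTA (Option α) L C P) (w : TWord α) (hw : IsTW w)
    (N : ℕ)
    (hNmem : ∃ (v : P → ℚ≥0) (u : TWord (Option α)),
      u ∈ minusDollar (lang A v) ∧ u.length = N)
    (hNmin : ∀ v : P → ℚ≥0, ∀ u ∈ minusDollar (lang A v), N ≤ u.length)
    (i : ℕ) (hi : 1 ≤ i) (hiN : i + N ≤ w.length)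
    (a : α) (ha : letterAt w (i + N) = some a)
    (m : ℕ) (hm : 1 ≤ m) (hmD : (m : ℕ∞) < DeltaQS A N a) :
    ∀ (t₀ t' : ℝ) (v : P → ℚ≥0),
      tau w (i + m - 1) ≤ t₀ → t₀ < tau w (i + m) → (t₀, t', v) ∉ matchSet w A := by
  intro t₀ t' v hle hlt hmem
  obtain ⟨ht0, htt, hlang⟩ := hmem
  simp only at ht0 htt hlang
  have hpw : w.Pairwise (fun p q => p.2 < q.2) := by
    haveI : IsTrans (α × ℝ) (fun p q : α × ℝ => p.2 < q.2) := ⟨fun a b c => lt_trans⟩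
    exact List.isChain_iff_pairwise.1 hw.2
  have hmono := List.pairwise_iff_getElem.1 hpw
  set f := w.filter (fun p => decide (t₀ < p.2 ∧ p.2 < t')) with hf
  have hdl : (seg w t₀ t').dropLast
      = f.map (fun p => ((some p.1 : Option α), p.2 - t₀)) := by
    unfold seg
    exact List.dropLast_concat
  have hmd : (seg w t₀ t').dropLast ∈ minusDollar (lang A v) :=
    ⟨seg w t₀ t', hlang, by simp [seg], rfl⟩
  have hNf : N ≤ f.length := by
    have := hNmin v _ hmd
    rwa [hdl, List.length_map] at this
  set u' := untimed (seg w t₀ t').dropLast with hu'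
  have hu'mem : u' ∈ untimedS (minusDollar (lang A v)) := ⟨_, hmd, rfl⟩
  have hu'eq : u' = f.map (fun p => (some p.1 : Option α)) := by
    rw [hu', hdl, untimed, List.map_map]
    rfl
  have hu'len : u'.length = f.length := by rw [hu'eq, List.length_map]
  set x := List.replicate m ((some a : Option α)) ++ u' with hx
  have hxcat : x ∈ catLen m (untimedS (minusDollar (lang A v))) := by
    refine ⟨List.replicate m (some a), u', List.length_replicate, ?_, hu'mem, rfl⟩
    intro c hc
    rw [List.eq_of_mem_replicate hc]
    simp
  have hxsig : x ∈ sigNa N a := by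
    constructor
    · have : x.length = m + u'.length := by simp [hx]
      omega
    · by_cases hcase : N < m
      · rw [hx, List.getElem?_append_left (by simpa using hcase)]
        simp [List.getElem?_replicate, hcase]
      · push_neg at hcase
        set k0 := i + m - 1 with hk0
        have hk0lt : k0 < w.length := by omega
        have hiN1 : i + N - 1 < w.length := by omega
        have hlt' : t₀ < (w[k0]'hk0lt).2 := by
          have him : i + m = k0 + 1 := by omega
          rw [him, tau_eq w (k0 + 1) (by omega) (by omega) (by omega)] at hlt
          simpa using hlt
        have hle' : (w[k0 - 1]'(by omega)).2 ≤ t₀ := by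
          rwa [tau_eq w k0 (by omega) (by omega) (by omega)] at hle
        have hdropEq : w.filter (fun p => decide (t₀ < p.2)) = w.drop k0 := by
          conv_lhs => rw [← List.take_append_drop k0 w]
          rw [List.filter_append, List.filter_eq_nil_iff.2 ?_, List.filter_eq_self.2 ?_,
            List.nil_append]
          · intro p hp
            obtain ⟨j, hj, rfl⟩ := List.mem_iff_getElem.1 hp
            have hjlen : k0 + j < w.length := by rw [List.length_drop] at hj; omega
            rw [List.getElem_drop]
            simp only [decide_eq_true_eq]
            rcases Nat.eq_zero_or_pos j with rfl | hj0
            · simpa using hlt'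
            · exact lt_trans hlt' (hmono k0 (k0 + j) hk0lt hjlen (by omega))
          · intro p hp
            obtain ⟨j, hj, rfl⟩ := List.mem_iff_getElem.1 hp
            have hjk : j < k0 := by rw [List.length_take] at hj; omega
            rw [List.getElem_take]
            simp only [decide_eq_true_eq, not_lt]
            rcases eq_or_lt_of_le (by omega : j ≤ k0 - 1) with h | h
            · subst h; exact hle'
            · exact le_of_lt (lt_of_lt_of_le
                (hmono j (k0 - 1) (by omega) (by omega) h) hle')
        have hE : f = (w.drop k0).takeWhile (fun p => decide (p.2 < t')) := by
          rw [hf]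
          have hpred : (fun p : α × ℝ => decide (t₀ < p.2 ∧ p.2 < t'))
              = fun p => decide (p.2 < t') && decide (t₀ < p.2) := by
            funext p; rw [show (decide (t₀ < p.2 ∧ p.2 < t')) = (decide (t₀ < p.2) && decide (p.2 < t')) by simp, Bool.and_comm]
          rw [hpred, ← List.filter_filter, hdropEq,
            filterTW t' _ (List.Pairwise.sublist (List.drop_sublist k0 w) hpw)]
        have hfl : N - m < f.length := by omega
        have h1 : N - m < ((w.drop k0).takeWhile (fun p => decide (p.2 < t'))).length := by
          rw [← hE]; exact hfl
        have hfq : f[N - m]? = some (w[i + N - 1]'hiN1) := by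
          rw [hE, List.getElem?_eq_getElem h1]
          congr 1
          rw [(List.takeWhile_prefix _).getElem h1, List.getElem_drop]
          congr 1
          omega
        have haw : (w[i + N - 1]'hiN1).1 = a := by
          unfold letterAt at ha
          rw [List.getElem?_eq_getElem hiN1] at ha
          simpa using ha
        rw [hx, List.getElem?_append_right (by simpa using hcase)]
        simp only [List.length_replicate]
        rw [hu'eq, List.getElem?_map, hfq]
        simp [haw]
  have hDle : DeltaQS A N a ≤ (m : ℕ∞) :=
    sInf_le ⟨m, ⟨hm, v, x, hxsig, hxcat⟩, rfl⟩
  exact absurd hmD (not_lt.2 hDle)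

end PTPM
end

section
/- Let A = (Σ, L, ℓ_init, F, X, P, E) be a parametric timed automaton and ℓ ∈ L. Define A′_ℓ = (Σ, L ⊔ {ℓ_fin}, ℓ_init, {ℓ, ℓ_fin}, X, P, E′), where ℓ_fin is a fresh location and E′ = E ∪ {(ℓ, true, a, ∅, ℓ_fin) | a ∈ Σ} ∪ {(ℓ_fin, true, a, ∅, ℓ_fin) | a ∈ Σ} (true denotes the empty conjunction, satisfied by every clock valuation). Then for every parameter valuation v: L(A′_ℓ[v]) = L(A_ℓ[v]) · T(Σ), where A_ℓ denotes A with accepting set {ℓ} and · is the non-absorbing concatenation lifted to sets of timed words. -/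
open scoped Classical NNRat

namespace PTPM

/-- The PTA `A'_ℓ`: a fresh accepting sink location (`none`) reachable from `ℓ`
(and from itself) by unguarded, reset-free edges on every letter of `Σ`. -/
def primePTA {α L C P : Type*} (A : PTA α L C P) (ℓ : L) [Finite α] :
    PTA α (Option L) C P where
  init := some A.init
  acc := {some ℓ, none}
  edges :=
    ((fun e : L × Guard C P × α × Set C × L =>
        ((some e.1 : Option L), e.2.1, e.2.2.1, e.2.2.2.1, (some e.2.2.2.2 : Option L)))
      '' A.edges)
    ∪ Set.range (fun a : α =>
        ((some ℓ : Option L), ([] : Guard C P), a, (∅ : Set C), (none : Option L)))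
    ∪ Set.range (fun a : α =>
        ((none : Option L), ([] : Guard C P), a, (∅ : Set C), (none : Option L)))
  finEdges := ((A.finEdges.image _).union (Set.finite_range _)).union (Set.finite_range _)

section AuxLemmas

variable {α L C P : Type*}

lemma lastT_nil : lastT ([] : TWord α) = 0 := rfl

lemma lastT_cons (p : α × ℝ) (w : TWord α) :
    lastT (p :: w) = if w = [] then p.2 else lastT w := by
  cases w with
  | nil => simp [lastT]
  | cons q w => simp [lastT, List.getLast?_cons_cons]

lemma lastT_eq_getLast {w : TWord α} (h : w ≠ []) : lastT w = (w.getLast h).2 := by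
  simp [lastT, List.getLast?_eq_getLast h]

lemma lastT_nonneg {w : TWord α} (h : IsTW w) : 0 ≤ lastT w := by
  rcases eq_or_ne w [] with rfl | hne
  · simp [lastT]
  · rw [lastT_eq_getLast hne]
    exact le_of_lt (h.1 _ (List.getLast_mem hne))

lemma shift_sub_cancel (w : TWord α) (t : ℝ) :
    shift (w.map fun p => (p.1, p.2 - t)) t = w := by
  induction w with
  | nil => rfl
  | cons p w ih => simp [shift] at ih ⊢; exact ih

lemma lastT_lt_snd {w₁ w₂ : TWord α} (h : IsTW (w₁ ++ w₂)) :
    ∀ p ∈ w₂, lastT w₁ < p.2 := by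
  intro p hp
  obtain ⟨hpos, hch⟩ := h
  rcases eq_or_ne w₁ [] with rfl | hne
  · simpa [lastT] using hpos p (by simp [hp])
  · have : IsTrans (α × ℝ) (fun p q => p.2 < q.2) := ⟨fun _ _ _ => lt_trans⟩
    have hpw := List.isChain_iff_pairwise.mp hch
    have := (List.pairwise_append.mp hpw).2.2
    rw [lastT_eq_getLast hne]
    exact this _ (List.getLast_mem hne) _ hp

end AuxLemmas
section StepsLemmas

variable {α L C P : Type*}

lemma steps_of_edges_eq {A B : PTA α L C P} (hE : A.edges = B.edges) {v : P → ℚ≥0} :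
    ∀ {s : L} {μ : C → ℝ} {τ : ℝ} {w : TWord α} {t : L},
      Steps A v s μ τ w t → Steps B v s μ τ w t := by
  intro s μ τ w t h
  induction h with
  | refl ℓ μ τ => exact .refl ℓ μ τ
  | step hd he hg h ih => exact .step hd (hE ▸ he) hg ih

lemma steps_append {A : PTA α L C P} {v : P → ℚ≥0} :
    ∀ {s : L} {μ : C → ℝ} {τ : ℝ} {w₁ : TWord α} {t : L}, Steps A v s μ τ w₁ t →
    ∀ {w₂ : TWord α} {t' : L},
      (∀ μ' : C → ℝ, Steps A v t μ' (if w₁ = [] then τ else lastT w₁) w₂ t') →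
      Steps A v s μ τ (w₁ ++ w₂) t' := by
  intro s μ τ w₁ t h
  induction h with
  | refl ℓ μ τ => intro w₂ t' hc; simpa using hc μ
  | @step ℓ μ τ g a R ℓ' ℓ'' d w hd he hg h ih =>
    intro w₂ t' hc
    refine Steps.step hd he hg (ih ?_)
    intro μ'
    have h2 := hc μ'
    rw [if_neg (List.cons_ne_nil _ _), lastT_cons] at h2
    exact h2

lemma lift_steps [Finite α] {A : PTA α L C P} (ℓ : L) {v : P → ℚ≥0} :
    ∀ {s : L} {μ : C → ℝ} {τ : ℝ} {w : TWord α} {t : L}, Steps A v s μ τ w t →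
      Steps (primePTA A ℓ) v (some s) μ τ w (some t) := by
  intro s μ τ w t h
  induction h with
  | refl ℓ' μ τ => exact .refl _ μ τ
  | @step ℓ₀ μ τ g a R ℓ' ℓ'' d w hd he hg h ih =>
    exact .step hd (Set.mem_union_left _ (Set.mem_union_left _ ⟨(ℓ₀, g, a, R, ℓ'), he, rfl⟩))
      hg ih

lemma steps_sink [Finite α] {A : PTA α L C P} {ℓ : L} {v : P → ℚ≥0} :
    ∀ (w : TWord α) (s : ℝ) (μ : C → ℝ) (τ : ℝ),
      (∀ q ∈ w.head?, τ ≤ q.2 + s) → w.Chain' (fun p q => p.2 < q.2) →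
      Steps (primePTA A ℓ) v none μ τ (shift w s) none := by
  intro w
  induction w with
  | nil => intro s μ τ _ _; exact .refl _ μ τ
  | cons p w ih =>
    intro s μ τ hh hch
    have hτ : τ ≤ p.2 + s := hh p rfl
    obtain ⟨hhd, hch'⟩ := List.isChain_cons.mp hch
    have hkey : shift (p :: w) s = (p.1, τ + (p.2 + s - τ)) :: shift w s := by
      simp [shift]
    rw [hkey]
    refine Steps.step (g := ([] : Guard C P)) (R := (∅ : Set C)) (ℓ' := (none : Option L))
      (by linarith) (Set.mem_union_right _ ⟨p.1, rfl⟩)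
      (fun a ha => absurd ha (List.not_mem_nil (a := a))) ?_
    have h3 : τ + (p.2 + s - τ) = p.2 + s := by ring
    rw [h3]
    exact ih s _ _ (fun q hq => by have := hhd q hq; linarith) hch'

lemma steps_none_none [Finite α] {A : PTA α L C P} {ℓ : L} {v : P → ℚ≥0} :
    ∀ {s : Option L} {μ : C → ℝ} {τ : ℝ} {w : TWord α} {t : Option L},
      Steps (primePTA A ℓ) v s μ τ w t → s = none → t = none := by
  intro s μ τ w t h
  induction h with
  | refl _ _ _ => exact id
  | @step ℓ₀ μ τ g a R ℓ' ℓ'' d w hd he hg h ih =>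
    rintro rfl
    rcases he with (⟨e, _, heq⟩ | ⟨b, heq⟩) | ⟨b, heq⟩ <;>
      simp only [Prod.mk.injEq] at heq
    · exact absurd heq.1 (by simp)
    · exact absurd heq.1 (by simp)
    · exact ih heq.2.2.2.2.symm

lemma steps_decomp [Finite α] {A : PTA α L C P} {ℓ : L} {v : P → ℚ≥0} :
    ∀ {s : Option L} {μ : C → ℝ} {τ : ℝ} {w : TWord α} {t : Option L},
      Steps (primePTA A ℓ) v s μ τ w t → ∀ ℓ₀ : L, s = some ℓ₀ →
      (∃ ℓ₁, t = some ℓ₁ ∧ Steps A v ℓ₀ μ τ w ℓ₁) ∨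
      (t = none ∧ ∃ w₁ w₂, w = w₁ ++ w₂ ∧ Steps A v ℓ₀ μ τ w₁ ℓ) := by
  intro s μ τ w t h
  induction h with
  | refl ℓ' μ τ =>
    rintro ℓ₀ rfl
    exact Or.inl ⟨ℓ₀, rfl, .refl ℓ₀ μ τ⟩
  | @step ℓs μ τ g a R ℓ' ℓ'' d w hd he hg h ih =>
    rintro ℓ₀ rfl
    rcases he with (⟨e, he', heq⟩ | ⟨b, heq⟩) | ⟨b, heq⟩ <;>
      simp only [Prod.mk.injEq] at heq
    · obtain ⟨h1, h2, h3, h4, h5⟩ := heq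
      obtain ⟨ℓe0, ge, ae, Re, ℓe1⟩ := e
      simp only at h1 h2 h3 h4 h5
      injection h1 with h1'; subst h1'
      subst h2; subst h3; subst h4
      rcases ih ℓe1 h5.symm with ⟨ℓ₁, rfl, hst⟩ | ⟨rfl, w₁, w₂, rfl, hst⟩
      · exact Or.inl ⟨ℓ₁, rfl, .step hd he' hg hst⟩
      · exact Or.inr ⟨rfl, (ae, τ + d) :: w₁, w₂, rfl, .step hd he' hg hst⟩
    · -- edge from ℓ (= ℓ₀) to none
      obtain ⟨h1, h2, h3, h4, h5⟩ := heq
      injection h1 with h1'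
      have ht : ℓ'' = none := steps_none_none h h5.symm
      refine Or.inr ⟨ht, [], (a, τ + d) :: w, rfl, ?_⟩
      rw [← h1']
      exact .refl ℓ μ τ
    · exact absurd heq.1 (by simp)

end StepsLemmas
/-- `L(A'_ℓ[v]) = L(A_ℓ[v]) · T(Σ)`. -/
theorem statement7 {α L C P : Type*} [Finite α] [Finite L] [Finite C] [Finite P]
    (A : PTA α L C P) (ℓ : L) (v : P → ℚ≥0) :
    lang (primePTA A ℓ) v = ncatS (lang (A.locAcc ℓ) v) (TW α) := by
  have hE : (A.locAcc ℓ).edges = A.edges := rfl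
  ext w
  constructor
  · rintro ⟨hTW, ℓ', hℓ', hst⟩
    have hℓ'' : ℓ' = some ℓ ∨ ℓ' = none := by
      simpa [primePTA] using hℓ'
    rcases steps_decomp hst A.init rfl with ⟨ℓ₁, ht, hs⟩ | ⟨ht, w₁, w₂, hw, hs⟩
    · have hℓ₁ : ℓ₁ = ℓ := by
        rcases hℓ'' with h | h
        · rw [h] at ht; injection ht.symm
        · rw [h] at ht; exact absurd ht (by simp)
      rw [hℓ₁] at hs
      refine ⟨w, ⟨hTW, ℓ, rfl, steps_of_edges_eq hE.symm hs⟩, [], ⟨by simp, List.IsChain.nil⟩, ?_⟩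
      simp [ncat, shift]
    · subst hw
      set T := lastT w₁ with hTdef
      have hlt : ∀ p ∈ w₂, T < p.2 := lastT_lt_snd hTW
      have hch := List.isChain_append.mp hTW.2
      have h1 : IsTW w₁ :=
        ⟨fun p hp => hTW.1 p (List.mem_append_left _ hp), hch.1⟩
      have h2 : IsTW (w₂.map fun q => (q.1, q.2 - T)) := by
        constructor
        · rintro p hp
          obtain ⟨q, hq, rfl⟩ := List.mem_map.mp hp
          simpa using hlt q hq
        · rw [List.Chain', List.isChain_map]
          exact hch.2.1.imp (fun hpq => by simpa using sub_lt_sub_right hpq T)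
      have heq : w₁ ++ w₂ = ncat w₁ (w₂.map fun q => (q.1, q.2 - T)) := by
        rw [ncat, ← hTdef, shift_sub_cancel]
      refine ⟨w₁, ⟨h1, ℓ, rfl, steps_of_edges_eq hE.symm hs⟩,
        (w₂.map fun q => (q.1, q.2 - T) : TWord α), ?_, heq⟩
      exact h2
  · rintro ⟨w₁, ⟨h1TW, ℓ₁, hℓ₁, hst⟩, w₂, h2TW, rfl⟩
    rw [(hℓ₁ : ℓ₁ = ℓ)] at hst
    have hstep : Steps A v A.init (fun _ => 0) 0 w₁ ℓ := steps_of_edges_eq hE hst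
    set T := lastT w₁ with hTdef
    have hT0 : 0 ≤ T := lastT_nonneg h1TW
    have hTWall : IsTW (ncat w₁ w₂) := by
      constructor
      · intro p hp
        rcases List.mem_append.mp hp with hp | hp
        · exact h1TW.1 p hp
        · obtain ⟨q, hq, rfl⟩ := List.mem_map.mp hp
          have := h2TW.1 q hq
          simpa using by linarith
      · refine List.isChain_append.mpr ⟨h1TW.2, ?_, ?_⟩
        · rw [shift, List.isChain_map]
          exact List.IsChain.imp (fun hpq => by simpa using add_lt_add_right hpq T) h2TW.2
        · intro x hx y hy
          have hx' : w₁.getLast? = some x := hx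
          have hxT : x.2 = T := by simp [hTdef, lastT, hx']
          rw [shift, List.head?_map] at hy
          obtain ⟨q, hq, rfl⟩ := Option.map_eq_some_iff.mp hy
          have := h2TW.1 q (List.mem_of_mem_head? hq)
          simp only [hxT]
          simpa using by linarith
    cases w₂ with
    | nil =>
      refine ⟨by simpa [ncat, shift] using h1TW, some ℓ, by simp [primePTA], ?_⟩
      have : ncat w₁ [] = w₁ := by simp [ncat, shift]
      rw [this]
      exact lift_steps ℓ hstep
    | cons p w =>
      refine ⟨hTWall, none, by simp [primePTA], ?_⟩
      rw [ncat, ← hTdef]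
      refine steps_append (lift_steps ℓ hstep) ?_
      intro μ'
      have hif : (if w₁ = [] then (0 : ℝ) else lastT w₁) = T := by
        split <;> simp_all [lastT]
      rw [hif]
      have hp0 : 0 < p.2 := h2TW.1 p (by simp)
      obtain ⟨hhd, hch'⟩ := List.isChain_cons.mp h2TW.2
      have hkey : shift (p :: w) T = (p.1, T + p.2) :: shift w T := by
        simp [shift, add_comm]
      rw [hkey]
      refine Steps.step (g := ([] : Guard C P)) (R := (∅ : Set C)) (ℓ' := (none : Option L))
        (le_of_lt hp0)
        (Set.mem_union_left _ (Set.mem_union_right _ ⟨p.1, rfl⟩))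
        (fun a ha => absurd ha (List.not_mem_nil (a := a))) ?_
      exact steps_sink w T _ (T + p.2) (fun q hq => by have := hhd q hq; linarith) hch'

end PTPM
end

section
/- Let Σ be a finite alphabet, w a timed word over Σ with timestamps τ_1 < … < τ_{|w|}, {F_p}_{p∈I} a family of sets of timed words over Σ ⊔ {$} indexed by an arbitrary set I, and G ⊆ T(Σ). Let 1 ≤ i ≤ j ≤ |w| and n ≥ 1 with i + n ≤ |w|. Suppose: (a) there exists a real t with 0 ≤ t < τ_i and w(i,j) − t ∈ G; and (b) for every p ∈ I, G · T(Σ) ∩ T^n(Σ) · {u + s | u ∈ (F_p)_{−$}, s ≥ 0} · T(Σ) = ∅. Then for every t₀ with τ_{i+n−1} ≤ t₀ < τ_{i+n}, every t′ > t₀, and every p ∈ I: w|_(t₀,t′) ∉ F_p. -/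
open scoped Classical NNRat

namespace PTPM

section Helpers
variable {α : Type*}

instance : IsTrans (α × ℝ) (fun p q => p.2 < q.2) := ⟨fun _ _ _ => lt_trans⟩

lemma isTW_iff_pairwise {w : TWord α} :
    IsTW w ↔ (∀ p ∈ w, 0 < p.2) ∧ w.Pairwise (fun p q => p.2 < q.2) := by
  unfold IsTW List.Chain'; rw [List.isChain_iff_pairwise]

lemma shift_append (a b : TWord α) (s : ℝ) : shift (a ++ b) s = shift a s ++ shift b s :=
  List.map_append

lemma shift_shift (l : TWord α) (s s' : ℝ) : shift (shift l s) s' = shift l (s + s') := by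
  simp only [shift, List.map_map]
  congr 1; funext p; simp [add_assoc]

lemma liftW_append (a b : TWord α) : liftW (a ++ b) = liftW a ++ liftW b :=
  List.map_append

lemma liftW_shift (l : TWord α) (s : ℝ) : liftW (shift l s) = shift (liftW l) s := by
  simp only [liftW, shift, List.map_map]; rfl

lemma lastT_shift {l : TWord α} (hl : l ≠ []) (s : ℝ) : lastT (shift l s) = lastT l + s := by
  simp only [lastT, shift, List.getLast?_map]
  rw [List.getLast?_eq_getLast hl]
  rfl

lemma lastT_liftW (l : TWord α) : lastT (liftW l) = lastT l := by
  simp only [lastT, liftW, List.getLast?_map]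
  cases h : l.getLast? <;> rfl

lemma lastT_append {a b : TWord α} (hb : b ≠ []) : lastT (a ++ b) = lastT b := by
  simp only [lastT]
  rw [List.getLast?_append_of_ne_nil _ hb]

lemma lastT_eq_getLast_s8 {l : TWord α} (hl : l ≠ []) : lastT l = (l.getLast hl).2 := by
  simp [lastT, List.getLast?_eq_getLast hl]

lemma lastT_drop {l : TWord α} {k : ℕ} (h : (l.drop k) ≠ []) : lastT (l.drop k) = lastT l := by
  have hl : l ≠ [] := by rintro rfl; simp at h
  rw [lastT_eq_getLast_s8 h, lastT_eq_getLast_s8 hl, List.getLast_drop]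

lemma mem_le_lastT {l : TWord α} (hp : l.Pairwise fun p q => p.2 < q.2) {q} (hq : q ∈ l) :
    q.2 ≤ lastT l := by
  have hl : l ≠ [] := by rintro rfl; simp at hq
  rw [lastT_eq_getLast_s8 hl]
  have hq2 : q ∈ l.dropLast ++ [l.getLast hl] := by
    rw [List.dropLast_append_getLast hl]; exact hq
  rcases List.mem_append.1 hq2 with h | h
  · have := (List.pairwise_append.1 (by rw [List.dropLast_append_getLast hl]; exact hp)).2.2
    exact le_of_lt (this q h _ (List.mem_singleton_self _))
  · rw [List.mem_singleton.1 h]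

lemma mem_take_le {w : TWord α} (hw : IsTW w) {k : ℕ} {q} (hq : q ∈ w.take k) :
    q.2 ≤ tau w k :=
  mem_le_lastT (((isTW_iff_pairwise.1 hw).2).sublist (List.take_sublist _ _)) hq

lemma mem_drop_lt {w : TWord α} (hw : IsTW w) {k : ℕ} {q} (hq : q ∈ w.drop k) :
    tau w k < q.2 := by
  obtain ⟨hpos, hp⟩ := isTW_iff_pairwise.1 hw
  rcases eq_or_ne (w.take k) [] with h | h
  · have : tau w k = 0 := by simp [tau, h, lastT]
    rw [this]; exact hpos q (List.mem_of_mem_drop hq)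
  · have hsplit : w = w.take k ++ w.drop k := (List.take_append_drop k w).symm
    have hpa := List.pairwise_append.1 (hsplit ▸ hp)
    have hg : (w.take k).getLast h ∈ w.take k := List.getLast_mem h
    have := hpa.2.2 _ hg q hq
    rwa [tau, lastT_eq_getLast_s8 h]

lemma tau_succ {w : TWord α} {k : ℕ} (h : k < w.length) : tau w (k + 1) = w[k].2 := by
  have h2 : w.take (k+1) = w.take k ++ [w[k]] := by
    rw [List.take_succ, List.getElem?_eq_getElem h]; rfl
  rw [tau, h2, lastT_append (by simp)]
  rfl

lemma mem_drop_succ_le {w : TWord α} (hw : IsTW w) {k : ℕ} (hk : k < w.length) {q}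
    (hq : q ∈ w.drop k) : tau w (k + 1) ≤ q.2 := by
  rw [List.drop_eq_getElem_cons hk] at hq
  rcases List.mem_cons.1 hq with h | h
  · rw [h, tau_succ hk]
  · exact le_of_lt (by rw [tau_succ hk]; calc w[k].2 = tau w (k+1) := (tau_succ hk).symm
      _ < q.2 := mem_drop_lt hw h)

lemma tau_nonneg {w : TWord α} (hw : IsTW w) (k : ℕ) : 0 ≤ tau w k := by
  rcases eq_or_ne (w.take k) [] with h | h
  · simp [tau, h, lastT]
  · rw [tau, lastT_eq_getLast_s8 h]
    exact le_of_lt (hw.1 _ (List.mem_of_mem_take (List.getLast_mem h)))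

lemma tau_mono {w : TWord α} (hw : IsTW w) {k m : ℕ} (hkm : k ≤ m) : tau w k ≤ tau w m := by
  rcases eq_or_ne (w.take k) [] with h | h
  · rw [tau, h]
    simpa [lastT] using tau_nonneg hw m
  · rw [tau, lastT_eq_getLast_s8 h]
    refine mem_take_le hw ?_
    have hmem : (w.take k).getLast h ∈ (w.take m).take k := by
      rw [List.take_take, min_eq_left hkm]
      exact List.getLast_mem h
    exact List.mem_of_mem_take hmem

lemma isTW_shift {l : TWord α} (hp : l.Pairwise fun p q => p.2 < q.2) (s : ℝ)
    (hpos : ∀ q ∈ l, 0 < q.2 + s) : IsTW (shift l s) := by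
  rw [isTW_iff_pairwise]
  constructor
  · rintro p hp'
    obtain ⟨q, hq, rfl⟩ := List.mem_map.1 hp'
    exact hpos q hq
  · rw [shift, List.pairwise_map]
    exact hp.imp (by intro a b h; simpa using h)

lemma filter_eq_takeWhile {β : Type*} {R : β → β → Prop} {q : β → Bool} :
    ∀ {l : List β}, l.Pairwise R → (∀ a b, R a b → q b = true → q a = true) →
      l.filter q = l.takeWhile q
  | [], _, _ => rfl
  | a :: l, hp, hdc => by
    rcases List.pairwise_cons.1 hp with ⟨ha, hl⟩
    by_cases h : q a
    · rw [List.filter_cons_of_pos h, List.takeWhile_cons_of_pos h,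
        filter_eq_takeWhile hl hdc]
    · rw [List.filter_cons_of_neg h, List.takeWhile_cons_of_neg h]
      rw [List.filter_eq_nil_iff]
      intro b hb hqb
      exact h (hdc a b (ha b hb) hqb)

/-- `shift (w.drop k) (-(tau w k))` is a timed word. -/
lemma dropShift_mem {w : TWord α} (hw : IsTW w) (k : ℕ) :
    shift (w.drop k) (-(tau w k)) ∈ TW α := by
  refine isTW_shift (((isTW_iff_pairwise.1 hw).2).sublist (List.drop_sublist _ _)) _ ?_
  intro q hq
  have := mem_drop_lt hw hq
  linarith

lemma drop_eq_drop_take_append {w : TWord α} {k j : ℕ} (hkj : k ≤ j) (hj : j ≤ w.length) :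
    (w.take j).drop k ++ w.drop j = w.drop k := by
  conv_rhs => rw [← List.take_append_drop j w]
  rw [List.drop_append, List.length_take, min_eq_left hj,
    Nat.sub_eq_zero_of_le hkj, List.drop_zero]

end Helpers

/-- abstract KMP-style skipping principle for families of specifications. -/
theorem statement8 {α : Type*} [Finite α] {I : Type*} (w : TWord α) (hw : IsTW w)
    (F : I → Set (TWord (Option α))) (G : Set (TWord α)) (hG : G ⊆ TW α)
    (i j n : ℕ) (hi : 1 ≤ i) (hij : i ≤ j) (hj : j ≤ w.length)
    (hn : 1 ≤ n) (hin : i + n ≤ w.length)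
    (ha : ∃ t : ℝ, 0 ≤ t ∧ t < tau w i ∧ shift (sub w i j) (-t) ∈ G)
    (hb : ∀ p : I,
      liftW '' ncatS G (TW α) ∩
        ncatS (ncatS (TWln α n) (hatS (minusDollar (F p)))) (TWl α) = ∅) :
    ∀ t₀ : ℝ, tau w (i + n - 1) ≤ t₀ → t₀ < tau w (i + n) →
      ∀ t' : ℝ, t₀ < t' → ∀ p : I, seg w t₀ t' ∉ F p := by
  intro t₀ ht₀l ht₀r t' ht' p hmem
  obtain ⟨t, ht0, hti, hG⟩ := ha
  obtain ⟨hpos, hpair⟩ := isTW_iff_pairwise.1 hw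
  have hilen : i - 1 < w.length := by omega
  have hinlen : i + n - 1 < w.length := by omega
  -- timing facts
  have htin : t < tau w (i + n - 1) :=
    lt_of_lt_of_le hti (tau_mono hw (by omega))
  have htt0 : t < t₀ := lt_of_lt_of_le htin ht₀l
  -- the witness word
  set X : TWord (Option α) := liftW (shift (w.drop (i - 1)) (-t)) with hX
  -- the filter predicate of seg
  set P : α × ℝ → Bool := fun q => decide (t₀ < q.2 ∧ q.2 < t') with hP
  set D : TWord α := w.drop (i + n - 1) with hD
  set A : TWord α := D.takeWhile (fun q => decide (q.2 < t')) with hA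
  set J : ℕ := i + n - 1 + A.length with hJ
  have hAtake : A = D.take A.length :=
    List.prefix_iff_eq_take.1 (List.takeWhile_prefix _)
  have hAlen : A.length ≤ D.length := by
    rw [hAtake, List.length_take]; exact min_le_right _ _
  have hJle : J ≤ w.length := by
    have : D.length = w.length - (i + n - 1) := by rw [hD, List.length_drop]
    omega
  -- membership in the left set
  have hmem1 : X ∈ liftW '' ncatS G (TW α) := by
    refine ⟨shift (w.drop (i - 1)) (-t), ?_, rfl⟩
    refine ⟨shift (sub w i j) (-t), hG, shift (w.drop j) (-(tau w j)), dropShift_mem hw j, ?_⟩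
    have hsubne : sub w i j ≠ [] := by
      refine List.ne_nil_of_length_pos ?_
      rw [sub, List.length_drop, List.length_take]
      omega
    have hlg : lastT (shift (sub w i j) (-t)) = tau w j + -t := by
      rw [lastT_shift hsubne]
      congr 1
      rw [sub, lastT_drop hsubne]
      rfl
    rw [ncat, hlg, shift_shift]
    have harg : -(tau w j) + (tau w j + -t) = -t := by ring
    rw [harg, ← shift_append, sub, drop_eq_drop_take_append (by omega) hj]
  -- identify the dropped-dollar word
  have hsegne : seg w t₀ t' ≠ [] := by simp [seg]
  set m : TWord (Option α) := (seg w t₀ t').dropLast with hm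
  have hmval : m = (w.filter P).map fun q => ((some q.1 : Option α), q.2 - t₀) := by
    rw [hm, seg, List.dropLast_concat]
  -- the pattern chunk of length n
  set sub' : TWord α := (w.take (i + n - 1)).drop (i - 1) with hsub'
  have hsub'len : sub'.length = n := by
    rw [hsub', List.length_drop, List.length_take]; omega
  have hsub'ne : sub' ≠ [] := List.ne_nil_of_length_pos (by omega)
  have hsub'mem : ∀ q ∈ sub', tau w i ≤ q.2 := by
    intro q hq
    have h1 : q ∈ w.drop (i - 1) := by
      rw [hsub', List.drop_take] at hq
      exact List.mem_of_mem_take hq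
    have := mem_drop_succ_le hw hilen h1
    rwa [Nat.sub_add_cancel hi] at this
  -- components of the right-hand decomposition
  set V : TWord (Option α) := liftW (shift sub' (-t)) with hV
  set Y : TWord (Option α) := shift m (t₀ - tau w (i + n - 1)) with hY
  set Z : TWord (Option α) := liftW (shift (w.drop J) (-(tau w J))) with hZ
  -- filter = takeWhile identification
  have hfilt : w.filter P = A := by
    have hsplit : w = w.take (i + n - 1) ++ D := (List.take_append_drop _ w).symm
    have h1 : (w.take (i + n - 1)).filter P = [] := by
      rw [List.filter_eq_nil_iff]
      intro q hq hPq
      have := mem_take_le hw hq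
      rw [hP] at hPq
      have := of_decide_eq_true hPq
      linarith [this.1]
    have h2 : D.filter P = D.filter (fun q => decide (q.2 < t')) := by
      refine List.filter_congr ?_
      intro q hq
      have hge : tau w (i + n) ≤ q.2 := by
        have := mem_drop_succ_le hw hinlen hq
        rwa [Nat.sub_add_cancel (by omega)] at this
      have hgt : t₀ < q.2 := lt_of_lt_of_le ht₀r hge
      rw [hP]
      simp [hgt]
    have h3 : D.filter (fun q => decide (q.2 < t')) = A := by
      rw [hA]
      refine filter_eq_takeWhile (R := fun p q : α × ℝ => p.2 < q.2)
        (hpair.sublist (List.drop_sublist _ _)) ?_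
      intro a b hab hb
      have := of_decide_eq_true hb
      exact decide_eq_true (by linarith)
    conv_lhs => rw [hsplit]
    rw [List.filter_append, h1, List.nil_append, h2, h3]
  -- the combined chunk
  set chunk : TWord α := (w.take J).drop (i - 1) with hchunk
  have hchunkeq : sub' ++ A = chunk := by
    rw [hsub', hchunk, hAtake, hJ, List.take_add, List.drop_append,
      List.length_take, min_eq_left (by omega : i + n - 1 ≤ w.length),
      Nat.sub_eq_zero_of_le (by omega : i - 1 ≤ i + n - 1), List.drop_zero, hD]
  have hchunkne : chunk ≠ [] := by
    refine List.ne_nil_of_length_pos ?_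
    rw [hchunk, List.length_drop, List.length_take]
    omega
  -- lastT of V
  have hlastV : lastT V = tau w (i + n - 1) + -t := by
    rw [hV, lastT_liftW, lastT_shift hsub'ne]
    congr 1
    rw [hsub', lastT_drop hsub'ne]
    rfl
  -- ncat V Y
  have hVY : ncat V Y = liftW (shift chunk (-t)) := by
    rw [ncat, hlastV, hY, shift_shift]
    have hsm : shift m (t₀ - tau w (i + n - 1) + (tau w (i + n - 1) + -t))
        = liftW (shift (w.filter P) (-t)) := by
      rw [hmval]
      simp only [shift, liftW, List.map_map]
      congr 1
      funext q
      simp only [Function.comp_apply]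
      congr 1
      ring
    rw [hsm, hfilt, hV, ← liftW_append, ← shift_append, hchunkeq]
  have hlastVY : lastT (ncat V Y) = tau w J + -t := by
    rw [hVY, lastT_liftW, lastT_shift hchunkne]
    congr 1
    rw [hchunk, lastT_drop hchunkne]
    rfl
  -- full equality
  have hfull : ncat (ncat V Y) Z = X := by
    rw [ncat, hlastVY, hVY, hZ, ← liftW_shift, shift_shift]
    have harg : -(tau w J) + (tau w J + -t) = -t := by ring
    rw [harg, ← liftW_append, ← shift_append, hchunk,
      drop_eq_drop_take_append (by omega) hJle]
  -- membership in the right set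
  have hmem2 : X ∈ ncatS (ncatS (TWln α n) (hatS (minusDollar (F p)))) (TWl α) := by
    refine ⟨ncat V Y, ⟨V, ?_, Y, ?_, rfl⟩, Z, ?_, hfull.symm⟩
    · refine ⟨shift sub' (-t), ⟨?_, ?_⟩, rfl⟩
      · refine isTW_shift (hpair.sublist ?_) _ ?_
        · exact ((List.drop_sublist _ _).trans (List.take_sublist _ _))
        · intro q hq
          have := hsub'mem q hq
          linarith
      · rw [shift, List.length_map, hsub'len]
    · exact ⟨m, ⟨seg w t₀ t', hmem, hsegne, rfl⟩, t₀ - tau w (i + n - 1), by linarith, rfl⟩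
    · exact ⟨shift (w.drop J) (-(tau w J)), dropShift_mem hw J, rfl⟩
  have := hb p
  rw [Set.eq_empty_iff_forall_notMem] at this
  exact this X ⟨hmem1, hmem2⟩


end PTPM
end
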